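/- In the 3-agent instance with shares (ε, ε, 1−2ε) and identical valuations (−ε+ε², −ε², −ε, −1+2ε) for chores 1–4 (0 < ε < 1/4 sufficiently small), the allocation X_1 = {1,2}, X_2 = {3}, X_3 = {4} is a WMMS allocation: WMMS_1 = WMMS_2 = −ε and WMMS_3 = −1+2ε, and V_i(X_i) ≥ WMMS_i for each i. -/

import Mathlib

open Finset

/-- Total value of bundle `k` in the partition `X` of the chores, under valuation `V`. -/
noncomputable def bundleVal {n m : ℕ} (V : Fin m → ℝ) (X : Fin m → Fin n) (k : Fin n) : ℝ :=
  ∑ j ∈ Finset.univ.filter (fun j => X j = k), V j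

/-- The weighted maxmin share of agent `i` with valuation `V` and shares `s`:
`s i` times the maximum over all `n`-partitions of the minimum weighted bundle ratio. -/
noncomputable def WMMS {n m : ℕ} (hn : 0 < n) (s : Fin n → ℝ) (V : Fin m → ℝ) (i : Fin n) : ℝ :=
  haveI : NeZero n := ⟨hn.ne'⟩
  s i * (Finset.univ : Finset (Fin m → Fin n)).sup' Finset.univ_nonempty
    (fun X => (Finset.univ : Finset (Fin n)).inf' Finset.univ_nonempty
      (fun k => bundleVal V X k / s k))

/-!
If some partition `X` gives every bundle `k` exactly the value `c * s k`, then no partition can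
make every ratio `V(Y_k) / s_k` exceed `c`, since the bundle values of any partition add up to
`V(all chores) = c * ∑ s`. Hence the max–min ratio is `c` and `WMMS_i = c * s_i`. In the instance,
`X = ({1,2}, {3}, {4})` is such a partition with `c = -1`.
-/

theorem sum_bundleVal {n m : ℕ} (V : Fin m → ℝ) (Y : Fin m → Fin n) :
    ∑ k, bundleVal V Y k = ∑ j, V j := by
  simpa [bundleVal] using Finset.sum_fiberwise Finset.univ Y V

section Proportional

variable {n m : ℕ} [NeZero n] {s : Fin n → ℝ} {V : Fin m → ℝ} {X : Fin m → Fin n} {c : ℝ}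

theorem inf'_bundleVal_div_le_of_proportional (hs : ∀ k, 0 < s k)
    (hX : ∀ k, bundleVal V X k = c * s k) (Y : Fin m → Fin n) :
    univ.inf' univ_nonempty (fun k => bundleVal V Y k / s k) ≤ c := by
  by_contra! h
  have hgt : ∀ k ∈ univ, c * s k < bundleVal V Y k := fun k hk =>
    (lt_div_iff₀ (hs k)).mp (h.trans_le (inf'_le _ hk))
  have := sum_lt_sum_of_nonempty univ_nonempty hgt
  rw [sum_bundleVal, ← sum_bundleVal V X, sum_congr rfl fun k _ => hX k] at this
  exact this.false

theorem maxMinRatio_eq_of_proportional (hs : ∀ k, 0 < s k)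
    (hX : ∀ k, bundleVal V X k = c * s k) :
    (univ : Finset (Fin m → Fin n)).sup' univ_nonempty
      (fun Y => univ.inf' univ_nonempty (fun k => bundleVal V Y k / s k)) = c := by
  refine le_antisymm (sup'_le _ _ fun Y _ => inf'_bundleVal_div_le_of_proportional hs hX Y) ?_
  refine le_sup'_of_le _ (mem_univ X) (le_inf' _ _ fun k _ => ?_)
  rw [hX k, mul_div_cancel_right₀ _ (hs k).ne']

theorem WMMS_eq_of_proportional (hn : 0 < n) (hs : ∀ k, 0 < s k)
    (hX : ∀ k, bundleVal V X k = c * s k) (i : Fin n) :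
    WMMS hn s V i = c * s i := by
  rw [WMMS, maxMinRatio_eq_of_proportional hs hX, mul_comm]

end Proportional

/-- The 3-agent instance with shares `(ε, ε, 1-2ε)` and identical valuation
`(-ε+ε², -ε², -ε, -1+2ε)`: `WMMS` values are `(-ε, -ε, -(1-2ε))`, and the allocation
`X₁ = {1,2}, X₂ = {3}, X₃ = {4}` is an exact WMMS allocation. -/
theorem stmt_16 (ε : ℝ) (hε : 0 < ε) (hε' : ε < 1/4) :
    let s : Fin 3 → ℝ := ![ε, ε, 1 - 2*ε]
    let V : Fin 4 → ℝ := ![-ε + ε^2, -ε^2, -ε, -1 + 2*ε]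
    let X : Fin 4 → Fin 3 := ![0, 0, 1, 2]
    WMMS (by norm_num) s V 0 = -ε ∧
    WMMS (by norm_num) s V 1 = -ε ∧
    WMMS (by norm_num) s V 2 = -(1 - 2*ε) ∧
    ∀ i : Fin 3, bundleVal V X i ≥ WMMS (by norm_num) s V i := by
  intro s V X
  have hs : ∀ k, 0 < s k := by
    intro k; fin_cases k <;> simp [s] <;> linarith
  have hX : ∀ k, bundleVal V X k = -1 * s k := by
    intro k
    fin_cases k <;> simp [bundleVal, s, V, X, sum_filter, Fin.sum_univ_four]; ring
  have hW := WMMS_eq_of_proportional (by norm_num) hs hX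
  refine ⟨?_, ?_, ?_, fun i => ?_⟩
  · simp [hW, s]
  · simp [hW, s]
  · simp [hW, s]
  · rw [hW, hX]
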